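/- arXiv:2405.11652 — 7 statements merged into one kernel-verified Lean document; each statement's English description precedes it below -/
import Mathlib

section
/- If H is a K-P_t-subnormal subgroup of a finite group G and N is a normal subgroup of G, then H ∩ N is K-P_t-subnormal in N. -/
/-- One step of a `K`-`ℙ_t`-subnormal chain: `A ≤ B` and either `A` is normal in `B`,
or the index `|B : A|` is a prime `p` such that `p - 1` is not divisible by the
`(t+1)`-th power of any prime. -/
def KPtStep (t : ℕ) {G : Type*} [Group G] (A B : Subgroup G) : Prop :=
  A ≤ B ∧ ((A.subgroupOf B).Normal ∨
    ∃ p : ℕ, p.Prime ∧ A.relIndex B = p ∧ ∀ q : ℕ, q.Prime → ¬ q ^ (t + 1) ∣ (p - 1))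

/-- `H` is `K`-`ℙ_t`-subnormal in `G` if there is a chain
`H = H₀ ≤ H₁ ≤ ⋯ ≤ Hₙ = G` each step of which is a `KPtStep`. -/
def KPtSubnormal (t : ℕ) {G : Type*} [Group G] (H : Subgroup G) : Prop :=
  Relation.ReflTransGen (KPtStep t) H ⊤

/-!
Intersecting with `N` maps each step `A ≤ B` of a chain to a step `A ∩ N ≤ B ∩ N`. Normality
of `A` in `B` passes to the intersections, and `|B ∩ N : A ∩ N| = |A(B ∩ N) : A|` divides
`|B : A|`, so a step of prime index `p` becomes either an equality or a step of index `p`.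
-/

namespace Subgroup

variable {G : Type*} [Group G]

theorem relIndex_dvd_index_of_normal_right [Finite G] (H K : Subgroup G) [K.Normal] :
    H.relIndex K ∣ H.index := by
  -- `|K : H ∩ K| |G : K| = |G : H ∩ K| = |H : H ∩ K| |G : H|` and `|G : K| = |H : H ∩ K| |G : HK|`
  have hK : K.relIndex H ≠ 0 := FiniteIndex.index_ne_zero
  have hinf : H.relIndex K * K.index = K.relIndex H * H.index := by
    simpa [inf_relIndex_left, ← relIndex_mul_index (inf_le_left : H ⊓ K ≤ H)] using
      relIndex_inf_mul_relIndex H K ⊤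
  rw [← relIndex_mul_index (le_sup_right : K ≤ H ⊔ K), relIndex_sup_right] at hinf
  refine Dvd.intro (H ⊔ K).index (Nat.eq_of_mul_eq_mul_left (Nat.pos_of_ne_zero hK) ?_)
  rw [← hinf]
  ring

theorem relIndex_subgroupOf_dvd_relIndex [Finite G] (A B N : Subgroup G) [N.Normal] :
    (A.subgroupOf N).relIndex (B.subgroupOf N) ∣ A.relIndex B := by
  rw [subgroupOf, relIndex_comap, subgroupOf_map_subtype,
    ← relIndex_subgroupOf (inf_le_left : B ⊓ N ≤ B), inf_subgroupOf_left]
  exact relIndex_dvd_index_of_normal_right _ _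

theorem normal_subgroupOf_subgroupOf {A B : Subgroup G} (hAB : A ≤ B)
    (hA : (A.subgroupOf B).Normal) (N : Subgroup G) :
    ((A.subgroupOf N).subgroupOf (B.subgroupOf N)).Normal := by
  rw [normal_subgroupOf_iff_le_normalizer (subgroupOf_mono N hAB)]
  rw [normal_subgroupOf_iff_le_normalizer hAB] at hA
  exact (subgroupOf_mono N hA).trans (le_normalizer_comap _)

end Subgroup

open Subgroup

theorem KPtStep.subgroupOf_reflTransGen {G : Type*} [Group G] [Finite G] {t : ℕ}
    {A B : Subgroup G} (N : Subgroup G) [N.Normal] (h : KPtStep t A B) :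
    Relation.ReflTransGen (KPtStep t) (A.subgroupOf N) (B.subgroupOf N) := by
  obtain ⟨hAB, hA | ⟨p, hp, hindex, hp_sub_one⟩⟩ := h
  · exact .single ⟨subgroupOf_mono N hAB, .inl (normal_subgroupOf_subgroupOf hAB hA N)⟩
  · have hdvd := relIndex_subgroupOf_dvd_relIndex A B N
    rw [hindex] at hdvd
    rcases hp.eq_one_or_self_of_dvd _ hdvd with h1 | hpN
    · rw [le_antisymm (subgroupOf_mono N hAB) (relIndex_eq_one.mp h1)]
    · exact .single ⟨subgroupOf_mono N hAB, .inr ⟨p, hp, hpN, hp_sub_one⟩⟩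

theorem KPtSubnormal.subgroupOf {G : Type*} [Group G] [Finite G] {t : ℕ} {H : Subgroup G}
    (N : Subgroup G) [N.Normal] (hH : KPtSubnormal t H) : KPtSubnormal t (H.subgroupOf N) := by
  unfold KPtSubnormal
  rw [← top_subgroupOf N]
  exact hH.lift' (·.subgroupOf N) fun _ _ h ↦ h.subgroupOf_reflTransGen N

theorem stmt_2_general {G : Type*} [Group G] [Finite G] (t : ℕ)
    (H N : Subgroup G) [N.Normal] (hH : KPtSubnormal t H) :
    KPtSubnormal t ((H ⊓ N).subgroupOf N) := by
  rw [inf_subgroupOf_right]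
  exact hH.subgroupOf N

theorem stmt_2 {G : Type*} [Group G] [Finite G] (t : ℕ) (ht : 1 ≤ t)
    (H N : Subgroup G) [N.Normal] (hH : KPtSubnormal t H) :
    KPtSubnormal t ((H ⊓ N).subgroupOf N) :=
  stmt_2_general t H N hH
end

section
/- If H is a K-P_t-subnormal subgroup of a finite group G and N is a normal subgroup of G, then HN/N is K-P_t-subnormal in G/N. -/
/-!
The image of a chain `H = H₀ ≤ ⋯ ≤ Hₙ = G` under `G → G/N` is a chain from `HN/N` to `G/N`.
Normal steps stay normal, and the index of the image of a step divides the original index, so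
a step of prime index `p` either collapses to an equality or keeps the same prime `p`.
-/

section

variable {G G' : Type*} [Group G] [Group G'] (f : G →* G')

theorem Subgroup.normal_subgroupOf_map {A B : Subgroup G} (hAB : A ≤ B)
    (h : (A.subgroupOf B).Normal) : ((A.map f).subgroupOf (B.map f)).Normal := by
  rw [Subgroup.normal_subgroupOf_iff_le_normalizer hAB] at h
  rw [Subgroup.normal_subgroupOf_iff_le_normalizer (Subgroup.map_mono hAB)]
  exact (Subgroup.map_mono h).trans (Subgroup.le_normalizer_map f)

theorem Subgroup.relIndex_map_map_dvd (A B : Subgroup G) :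
    (A.map f).relIndex (B.map f) ∣ A.relIndex B := by
  rw [← Subgroup.relIndex_comap]
  exact Subgroup.relIndex_dvd_of_le_left B (Subgroup.le_comap_map f A)

theorem KPtStep.map {t : ℕ} {A B : Subgroup G} (h : KPtStep t A B) :
    Relation.ReflTransGen (KPtStep t) (A.map f) (B.map f) := by
  obtain ⟨hAB, hnormal | ⟨p, hp, hindex, hp_sub_one⟩⟩ := h
  · exact .single ⟨Subgroup.map_mono hAB, .inl (Subgroup.normal_subgroupOf_map f hAB hnormal)⟩
  · have hdvd := hindex ▸ Subgroup.relIndex_map_map_dvd f A B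
    rcases hp.eq_one_or_self_of_dvd _ hdvd with hone | hprime
    · rw [le_antisymm (Subgroup.map_mono hAB) (Subgroup.relIndex_eq_one.mp hone)]
    · exact .single ⟨Subgroup.map_mono hAB, .inr ⟨p, hp, hprime, hp_sub_one⟩⟩

theorem KPtSubnormal.map {t : ℕ} {H : Subgroup G} (hH : KPtSubnormal t H)
    {f : G →* G'} (hf : Function.Surjective f) : KPtSubnormal t (H.map f) := by
  have hchain : Relation.ReflTransGen (KPtStep t) (H.map f) ((⊤ : Subgroup G).map f) :=
    Relation.ReflTransGen.lift' (Subgroup.map f) (fun _ _ ↦ KPtStep.map f) _ _ hH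
  rwa [Subgroup.map_top_of_surjective f hf] at hchain

end

theorem stmt_3_general {G : Type*} [Group G] (t : ℕ)
    (H N : Subgroup G) [N.Normal] (hH : KPtSubnormal t H) :
    KPtSubnormal t ((H ⊔ N).map (QuotientGroup.mk' N)) := by
  rw [Subgroup.map_sup, QuotientGroup.map_mk'_self, sup_bot_eq]
  exact hH.map (QuotientGroup.mk'_surjective N)

theorem stmt_3 {G : Type*} [Group G] [Finite G] (t : ℕ) (ht : 1 ≤ t)
    (H N : Subgroup G) [N.Normal] (hH : KPtSubnormal t H) :
    KPtSubnormal t ((H ⊔ N).map (QuotientGroup.mk' N)) :=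
  stmt_3_general t H N hH
end

section
/- Let N be a normal subgroup of a finite group G and H a subgroup with N ≤ H. If H/N is K-P_t-subnormal in G/N, then H is K-P_t-subnormal in G. -/
/-! Full preimages under a surjection preserve both normality and relative indices, so a
`K`-`ℙ_t`-subnormal chain in `G ⧸ N` pulls back step by step to one in `G`, ending at the
preimage of `H ⧸ N`, which is `H` itself because `N ≤ H`. -/

section Comap

variable {t : ℕ} {G G' : Type*} [Group G] [Group G'] {f : G →* G'}

lemma KPtStep.comap (hf : Function.Surjective f) {A B : Subgroup G'} (h : KPtStep t A B) :
    KPtStep t (A.comap f) (B.comap f) := by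
  obtain ⟨hAB, hnormal | ⟨p, hp, hindex, hpow⟩⟩ := h
  · refine ⟨Subgroup.comap_mono hAB, Or.inl ?_⟩
    rw [Subgroup.normal_subgroupOf_iff_le_normalizer (Subgroup.comap_mono hAB)]
    exact (Subgroup.comap_mono
      ((Subgroup.normal_subgroupOf_iff_le_normalizer hAB).mp hnormal)).trans
      (Subgroup.le_normalizer_comap f)
  · refine ⟨Subgroup.comap_mono hAB, Or.inr ⟨p, hp, ?_, hpow⟩⟩
    rwa [Subgroup.relIndex_comap, Subgroup.map_comap_eq_self_of_surjective hf]

lemma KPtSubnormal.comap (hf : Function.Surjective f) {K : Subgroup G'}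
    (h : KPtSubnormal t K) : KPtSubnormal t (K.comap f) := by
  have : Relation.ReflTransGen (KPtStep t) (K.comap f) ((⊤ : Subgroup G').comap f) :=
    h.lift (Subgroup.comap f) fun _ _ hstep => hstep.comap hf
  rwa [Subgroup.comap_top] at this

end Comap

theorem stmt_4_general {G : Type*} [Group G] (t : ℕ)
    (H N : Subgroup G) [N.Normal] (hNH : N ≤ H)
    (h : KPtSubnormal t (H.map (QuotientGroup.mk' N))) :
    KPtSubnormal t H := by
  have := h.comap (QuotientGroup.mk'_surjective N)
  rwa [Subgroup.comap_map_eq, QuotientGroup.ker_mk', sup_of_le_left hNH] at this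

theorem stmt_4 {G : Type*} [Group G] [Finite G] (t : ℕ) (ht : 1 ≤ t)
    (H N : Subgroup G) [N.Normal] (hNH : N ≤ H)
    (h : KPtSubnormal t (H.map (QuotientGroup.mk' N))) :
    KPtSubnormal t H :=
  stmt_4_general t H N hNH h
end

section
/- Let H be a subgroup of a finite group G and N_1, N_2 normal subgroups of G. If HN_1 and HN_2 are both K-P_t-subnormal in G, then HN_1 ∩ HN_2 is K-P_t-subnormal in G. -/
/-!
Put `B = H N₂`. Intersecting a chain `H N₁ = X₀ ≤ X₁ ≤ ⋯ ≤ G` with `B` gives a chain from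
`H N₁ ∩ H N₂` to `B`, which `H N₂`'s own chain continues up to `G`. Normal steps stay normal,
and because every `Xᵢ` contains `H`, so that `B ≤ Xᵢ N₂`, a counting argument in `G / N₂` shows
`|Yᵢ ∩ B : Xᵢ ∩ B|` divides `|Yᵢ : Xᵢ|`; a prime step thus becomes the same prime step or
collapses.
-/

namespace Subgroup

variable {G G' : Type*} [Group G] [Group G']

/-- `|X : B ∩ X| = |f X : f B|` and `|Y : B ∩ Y| = |f Y : f B|` because `B` is a full preimage
under `f`; the claim then follows from the product formula for `|Y : X ∩ B|`. -/
theorem relIndex_inf_mul_relIndex_map [Finite G] (f : G →* G') {B X Y : Subgroup G}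
    (hker : f.ker ≤ B) (hBX : B ≤ X ⊔ f.ker) (hXY : X ≤ Y) :
    (X ⊓ B).relIndex (Y ⊓ B) * (X.map f).relIndex (Y.map f) = X.relIndex Y := by
  have hB : (B.map f).comap f = B := comap_map_eq_self hker
  have hmap : B.map f ≤ X.map f := by rwa [map_le_iff_le_comap, comap_map_eq]
  have hX : B.relIndex X = (B.map f).relIndex (X.map f) := by
    rw [← relIndex_comap, hB]
  have hY : B.relIndex Y = B.relIndex X * (X.map f).relIndex (Y.map f) := by
    rw [hX, relIndex_mul_relIndex _ _ _ hmap (map_mono hXY), ← relIndex_comap, hB]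
  have hprod : (X ⊓ B).relIndex (Y ⊓ B) * B.relIndex Y = B.relIndex X * X.relIndex Y :=
    calc (X ⊓ B).relIndex (Y ⊓ B) * B.relIndex Y
        = X.relIndex (B ⊓ Y) * B.relIndex Y := by
          rw [inf_comm B Y, ← inf_relIndex_right X, ← inf_assoc, inf_of_le_left hXY]
      _ = (X ⊓ B).relIndex X * X.relIndex Y := by
          rw [relIndex_inf_mul_relIndex, relIndex_mul_relIndex _ _ _ inf_le_left hXY]
      _ = B.relIndex X * X.relIndex Y := by rw [inf_relIndex_left]
  have hne : B.relIndex X ≠ 0 := index_ne_zero_of_finite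
  rw [hY, mul_left_comm] at hprod
  exact Nat.eq_of_mul_eq_mul_left (Nat.pos_of_ne_zero hne) hprod

theorem relIndex_inf_dvd_relIndex_of_le_sup [Finite G] {N B X Y : Subgroup G} [N.Normal]
    (hNB : N ≤ B) (hBX : B ≤ X ⊔ N) (hXY : X ≤ Y) :
    (X ⊓ B).relIndex (Y ⊓ B) ∣ X.relIndex Y := by
  rw [← QuotientGroup.ker_mk' N] at hNB hBX
  exact Dvd.intro _ (relIndex_inf_mul_relIndex_map _ hNB hBX hXY)

end Subgroup

section KPt

variable {G : Type*} [Group G] [Finite G] {t : ℕ} {N B : Subgroup G} [N.Normal]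

theorem KPtStep.inf {X Y : Subgroup G} (hNB : N ≤ B) (hBX : B ≤ X ⊔ N)
    (hstep : KPtStep t X Y) : Relation.ReflTransGen (KPtStep t) (X ⊓ B) (Y ⊓ B) := by
  obtain ⟨hXY, hnormal | ⟨p, hp, hindex, hp1⟩⟩ := hstep
  · exact .single ⟨inf_le_inf_right B hXY, .inl (Subgroup.inf_subgroupOf_inf_normal_of_left B)⟩
  · have hdvd : (X ⊓ B).relIndex (Y ⊓ B) ∣ p :=
      hindex ▸ Subgroup.relIndex_inf_dvd_relIndex_of_le_sup hNB hBX hXY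
    rcases hp.eq_one_or_self_of_dvd _ hdvd with hone | hprime
    · rw [le_antisymm (inf_le_inf_right B hXY) (Subgroup.relIndex_eq_one.mp hone)]
    · exact .single ⟨inf_le_inf_right B hXY, .inr ⟨p, hp, hprime, hp1⟩⟩

theorem KPtSubnormal.inf {X : Subgroup G} (hX : KPtSubnormal t X) (hNB : N ≤ B)
    (hBX : B ≤ X ⊔ N) : Relation.ReflTransGen (KPtStep t) (X ⊓ B) B := by
  unfold KPtSubnormal at hX
  induction hX using Relation.ReflTransGen.head_induction_on with
  | refl => rw [top_inf_eq]
  | head hstep _ ih =>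
    exact (hstep.inf hNB hBX).trans (ih (hBX.trans (sup_le_sup_right hstep.1 N)))

end KPt

theorem stmt_6_general {G : Type*} [Group G] [Finite G] (t : ℕ)
    (H N₁ N₂ : Subgroup G) [N₂.Normal]
    (h1 : KPtSubnormal t (H ⊔ N₁)) (h2 : KPtSubnormal t (H ⊔ N₂)) :
    KPtSubnormal t ((H ⊔ N₁) ⊓ (H ⊔ N₂)) :=
  (h1.inf le_sup_right (sup_le_sup_right le_sup_left N₂)).trans h2

theorem stmt_6 {G : Type*} [Group G] [Finite G] (t : ℕ) (ht : 1 ≤ t)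
    (H N₁ N₂ : Subgroup G) [N₁.Normal] [N₂.Normal]
    (h1 : KPtSubnormal t (H ⊔ N₁)) (h2 : KPtSubnormal t (H ⊔ N₂)) :
    KPtSubnormal t ((H ⊔ N₁) ⊓ (H ⊔ N₂)) :=
  stmt_6_general t H N₁ N₂ h1 h2
end

section
/- Let G be a finite soluble group and H, U subgroups of G. If H is K-P_t-subnormal in G, then H ∩ U is K-P_t-subnormal in U. -/
/-!
Intersecting a chain with `U` one step at a time reduces the claim to a single step `A ≤ C`,
and a normal step stays normal. For a step of prime index `p` in the solvable group `C`, pass to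
the core-free quotient `C / core(A)`: an abelian normal subgroup `M` there is a complement of
`A`, hence cyclic of order `p` and self-centralizing, and since `Aut M` is abelian it contains the
derived subgroup. Its preimage `K` gives, for every `V ≤ C`, the chain
`A ∩ V ≤ (A ∩ V)(K ∩ V) ≤ V`, whose lower step has index dividing `p` and whose upper step is
normal.
-/

open Subgroup Relation
open scoped commutatorElement

namespace Subgroup

variable {G : Type*} [Group G]

theorem relIndex_sup_right_of_le_normalizer {H K : Subgroup G} (h : H ≤ normalizer K) :
    K.relIndex (H ⊔ K) = K.relIndex H :=
  letI := normal_subgroupOf_of_le_normalizer h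
  letI := normal_subgroupOf_sup_of_le_normalizer h
  Nat.card_congr (QuotientGroup.quotientInfEquivProdNormalizerQuotient H K h).toEquiv.symm

theorem relIndex_sup_of_le_normalizer [Finite G] {H K : Subgroup G} (h : H ≤ normalizer K) :
    H.relIndex (H ⊔ K) = H.relIndex K := by
  have hne : (H ⊓ K).relIndex H ≠ 0 := index_ne_zero_of_finite
  apply Nat.eq_of_mul_eq_mul_left (Nat.pos_of_ne_zero hne)
  calc (H ⊓ K).relIndex H * H.relIndex (H ⊔ K)
      = (H ⊓ K).relIndex K * K.relIndex (H ⊔ K) := by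
        rw [relIndex_mul_relIndex _ _ _ inf_le_left le_sup_left,
          relIndex_mul_relIndex _ _ _ inf_le_right le_sup_right]
    _ = (H ⊓ K).relIndex H * H.relIndex K := by
        rw [relIndex_sup_right_of_le_normalizer h, inf_relIndex_left, inf_relIndex_right,
          mul_comm]

theorem relIndex_dvd_of_le_right_of_normal {N K L : Subgroup G} [N.Normal] (hLK : L ≤ K) :
    N.relIndex L ∣ N.relIndex K := by
  rw [← relIndex_subgroupOf hLK]
  exact relIndex_dvd_index_of_normal (H := N.subgroupOf K) _

theorem normal_subgroupOf_of_commutator_le {X V : Subgroup G} (hXV : X ≤ V) (h : ⁅V, V⁆ ≤ X) :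
    (X.subgroupOf V).Normal := by
  rw [normal_subgroupOf_iff hXV]
  intro x v hx hv
  have hcomm : ⁅v, x⁆ ∈ X := h (commutator_mem_commutator hv (hXV hx))
  simpa [commutatorElement_def] using mul_mem hcomm hx

theorem sup_eq_top_of_index_prime {A M : Subgroup G} (hA : A.index.Prime) (hMA : ¬M ≤ A) :
    M ⊔ A = ⊤ := by
  have hmul := relIndex_mul_index (le_sup_right : A ≤ M ⊔ A)
  rcases hA.eq_one_or_self_of_dvd _ (Dvd.intro_left _ hmul) with h | h
  · exact index_eq_one.mp h
  · rw [h, Nat.mul_eq_right hA.ne_zero, relIndex_eq_one] at hmul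
    exact absurd (le_sup_left.trans hmul) hMA

theorem inf_eq_bot_of_le_centralizer {A K M : Subgroup G} [K.Normal] (hMK : M ≤ centralizer K)
    (hMA : M ⊔ A = ⊤) (hA : A.normalCore = ⊥) : K ⊓ A = ⊥ := by
  suffices (K ⊓ A).Normal from le_bot_iff.mp (hA ▸ normal_le_normalCore.mpr inf_le_right)
  refine normalizer_eq_top_iff.mp (top_le_iff.mp (hMA ▸ sup_le ?_ ?_))
  · exact (hMK.trans (centralizer_le inf_le_left)).trans (centralizer_le_normalizer _)
  · exact le_inf le_normalizer_of_normal le_normalizer |>.trans inf_normalizer_le_normalizer_inf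

theorem eq_of_le_of_sup_eq_top_of_inf_eq_bot {A K M : Subgroup G} [M.Normal] (hMK : M ≤ K)
    (hMA : M ⊔ A = ⊤) (hKA : K ⊓ A = ⊥) : K = M := by
  refine le_antisymm (fun k hk => ?_) hMK
  obtain ⟨m, hm, a, ha, rfl⟩ := mem_sup_of_normal_left.mp (hMA ▸ mem_top k : k ∈ M ⊔ A)
  have ha' : a ∈ K ⊓ A := ⟨by simpa using mul_mem (inv_mem (hMK hm)) hk, ha⟩
  rw [hKA, mem_bot] at ha'
  simpa [ha'] using hm

theorem commutator_le_centralizer_of_isCyclic (M : Subgroup G) [M.Normal] [IsCyclic M] :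
    _root_.commutator G ≤ centralizer (M : Set G) := by
  let _ : CommGroup (MulAut M) := (IsCyclic.mulAutMulEquiv M).toMonoidHom.commGroupOfInjective
    (IsCyclic.mulAutMulEquiv M).injective
  intro g hg m hm
  have h := congrArg (fun e : MulAut M => (e ⟨m, hm⟩ : G))
    (Abelianization.commutator_subset_ker (MulAut.conjNormal (H := M)) hg)
  simp only [MulAut.conjNormal_apply, MulAut.one_apply] at h
  exact (mul_inv_eq_iff_eq_mul.mp h).symm

theorem normalCore_map_le {G' : Type*} [Group G'] {f : G →* G'} (hf : Function.Surjective f)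
    {A : Subgroup G} (hker : f.ker ≤ A) : (A.map f).normalCore ≤ A.normalCore.map f := by
  have hle : (A.map f).normalCore.comap f ≤ A.normalCore := by
    refine normal_le_normalCore.mpr ((comap_mono (normalCore_le _)).trans ?_)
    rw [comap_map_eq, sup_of_le_left hker]
  simpa only [map_comap_eq_self_of_surjective hf] using map_mono (f := f) hle

end Subgroup

theorem Group.IsSolvable.exists_normal_ne_bot_le_centralizer (Q : Type*) [Group Q]
    [Group.IsSolvable Q] [Nontrivial Q] :
    ∃ M : Subgroup Q, M.Normal ∧ M ≠ ⊥ ∧ M ≤ centralizer (M : Set Q) := by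
  classical
  have hex : ∃ n, derivedSeries Q n = ⊥ := Group.IsSolvable.solvable
  have hpos : Nat.find hex ≠ 0 := fun h0 => top_ne_bot (h0 ▸ Nat.find_spec hex)
  refine ⟨derivedSeries Q (Nat.find hex - 1), derivedSeries_normal Q _,
    Nat.find_min hex (by omega), ?_⟩
  rw [← commutator_eq_bot_iff_le_centralizer, ← derivedSeries_succ, Nat.sub_add_cancel
    (Nat.pos_of_ne_zero hpos)]
  exact Nat.find_spec hex

theorem exists_normal_complement_commutator_le_of_normalCore_eq_bot {Q : Type*} [Group Q]
    [Group.IsSolvable Q]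
    {A : Subgroup Q} (hA : A.index.Prime) (hcore : A.normalCore = ⊥) :
    ∃ M : Subgroup Q, M.Normal ∧ M ⊔ A = ⊤ ∧ M ⊓ A = ⊥ ∧ commutator Q ≤ M := by
  have : Nontrivial Q := by
    by_contra h
    rw [not_nontrivial_iff_subsingleton] at h
    exact hA.ne_one (index_eq_one.mpr (Subsingleton.elim _ _))
  obtain ⟨M, hM, hMne, hMab⟩ := Group.IsSolvable.exists_normal_ne_bot_le_centralizer Q
  have hMA : ¬M ≤ A := fun h => hMne (le_bot_iff.mp (hcore ▸ normal_le_normalCore.mpr h))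
  have hsup := sup_eq_top_of_index_prime hA hMA
  have hinf : M ⊓ A = ⊥ := inf_eq_bot_of_le_centralizer hMab hsup hcore
  have hcard : Nat.card M = A.index := by
    refine (IsComplement'.index_eq_card ?_).symm
    refine isComplement'_of_disjoint_and_mul_eq_univ (disjoint_iff.mpr hinf) ?_
    rw [← normal_mul, hsup, coe_top]
  have : Fact A.index.Prime := ⟨hA⟩
  have : IsCyclic M := isCyclic_of_prime_card hcard
  -- Commutators act trivially on `M` since `Aut M` is abelian, and `M` is self-centralizing.
  have hC : centralizer (M : Set Q) = M := eq_of_le_of_sup_eq_top_of_inf_eq_bot hMab hsup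
    (inf_eq_bot_of_le_centralizer (le_centralizer_iff.mp le_rfl) hsup hcore)
  exact ⟨M, hM, hsup, hinf, hC ▸ commutator_le_centralizer_of_isCyclic M⟩

theorem exists_normal_supplement_commutator_le_of_index_prime {B : Type*} [Group B]
    [Group.IsSolvable B] {A : Subgroup B} (hA : A.index.Prime) :
    ∃ K : Subgroup B, K.Normal ∧ K ⊔ A = ⊤ ∧ K ⊓ A = A.normalCore ∧ commutator B ≤ K := by
  set φ := QuotientGroup.mk' A.normalCore
  have hsurj : Function.Surjective φ := QuotientGroup.mk'_surjective _
  have hker : φ.ker ≤ A := (QuotientGroup.ker_mk' _).trans_le (normalCore_le A)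
  have hcomap : (A.map φ).comap φ = A := by rw [comap_map_eq, sup_of_le_left hker]
  have hcore : (A.map φ).normalCore = ⊥ := by
    refine le_bot_iff.mp ((normalCore_map_le hsurj hker).trans ?_)
    exact ((Subgroup.map_eq_bot_iff _).mpr (QuotientGroup.ker_mk' _).ge).le
  obtain ⟨M, hM, hsup, hinf, hcomm⟩ := exists_normal_complement_commutator_le_of_normalCore_eq_bot
    (A.index_map_eq hsurj hker ▸ hA) hcore
  refine ⟨M.comap φ, hM.comap φ, ?_, ?_, fun g hg => hcomm ?_⟩
  · calc M.comap φ ⊔ A = (M ⊔ A.map φ).comap φ := by rw [← comap_sup_eq _ _ _ hsurj, hcomap]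
      _ = ⊤ := by rw [hsup, comap_top]
  · calc M.comap φ ⊓ A = (M ⊓ A.map φ).comap φ := by rw [comap_inf, hcomap]
      _ = A.normalCore := by rw [hinf, MonoidHom.comap_bot, QuotientGroup.ker_mk']
  · rw [← derivedSeries_one] at hg ⊢
    exact map_derivedSeries_le_derivedSeries φ 1 (mem_map_of_mem φ hg)

namespace KPtStep

variable {G : Type*} [Group G] {t : ℕ}

theorem le_of_reflTransGen {X Y : Subgroup G} (h : ReflTransGen (KPtStep t) X Y) : X ≤ Y := by
  induction h with
  | refl => exact le_rfl
  | tail _ step ih => exact ih.trans step.1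

theorem subgroupOf {C D U : Subgroup G} (h : KPtStep t C D) (hDU : D ≤ U) :
    KPtStep t (C.subgroupOf U) (D.subgroupOf U) := by
  obtain ⟨hCD, hnormal | ⟨p, hp, hidx, hcond⟩⟩ := h
  · have hCDU : C.subgroupOf U ≤ D.subgroupOf U := comap_mono hCD
    refine ⟨hCDU, Or.inl ?_⟩
    rw [normal_subgroupOf_iff hCDU]
    intro x y hx hy
    simpa [mem_subgroupOf] using (normal_subgroupOf_iff hCD).mp hnormal _ _ hx hy
  · exact ⟨comap_mono hCD, Or.inr ⟨p, hp, by rwa [relIndex_subgroupOf hDU], hcond⟩⟩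

theorem map_subtype {B : Subgroup G} {X Y : Subgroup B} (h : KPtStep t X Y) :
    KPtStep t (X.map B.subtype) (Y.map B.subtype) := by
  obtain ⟨hXY, hnormal | ⟨p, hp, hidx, hcond⟩⟩ := h
  · refine ⟨map_mono hXY, Or.inl ?_⟩
    rw [normal_subgroupOf_iff (map_mono hXY)]
    rintro _ _ ⟨x, hx, rfl⟩ ⟨y, hy, rfl⟩
    exact ⟨y * x * y⁻¹, (normal_subgroupOf_iff hXY).mp hnormal x y hx hy, by simp⟩
  · refine ⟨map_mono hXY, Or.inr ⟨p, hp, ?_, hcond⟩⟩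
    rwa [← relIndex_comap, comap_map_eq_self_of_injective B.subtype_injective]

theorem reflTransGen_of_relIndex_dvd {S X : Subgroup G} {p : ℕ} (hp : p.Prime)
    (hcond : ∀ q : ℕ, q.Prime → ¬q ^ (t + 1) ∣ (p - 1)) (hSX : S ≤ X) (hdvd : S.relIndex X ∣ p) :
    ReflTransGen (KPtStep t) S X := by
  rcases hp.eq_one_or_self_of_dvd _ hdvd with h | h
  · rw [le_antisymm hSX (relIndex_eq_one.mp h)]
  · exact .single ⟨hSX, Or.inr ⟨p, hp, h, hcond⟩⟩

end KPtStep

section Solvable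

variable {G : Type*} [Group G] [Finite G] [Group.IsSolvable G] {t : ℕ}

/-- For a normal supplement `K` of `A` with `G / K` abelian and `K ⊓ A` normal, the chain is
`A ⊓ V ≤ (A ⊓ V) ⊔ (K ⊓ V) ≤ V`: the top step is normal, the bottom one has index dividing
`|K : K ⊓ A| = |G : A|`. -/
theorem reflTransGen_kPtStep_inf_of_index_prime {A : Subgroup G} (hA : A.index.Prime)
    (hcond : ∀ q : ℕ, q.Prime → ¬q ^ (t + 1) ∣ (A.index - 1)) (V : Subgroup G) :
    ReflTransGen (KPtStep t) (A ⊓ V) V := by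
  obtain ⟨K, hK, hsup, hinf, hcomm⟩ := exists_normal_supplement_commutator_le_of_index_prime hA
  have hVK : V ≤ normalizer (K ⊓ V : Subgroup G) :=
    (le_inf le_normalizer_of_normal le_normalizer).trans inf_normalizer_le_normalizer_inf
  have hXV : A ⊓ V ⊔ K ⊓ V ≤ V := sup_le inf_le_right inf_le_right
  have hidx : (A ⊓ V).relIndex (A ⊓ V ⊔ K ⊓ V) ∣ A.index :=
    calc (A ⊓ V).relIndex (A ⊓ V ⊔ K ⊓ V)
        = (A ⊓ V).relIndex (K ⊓ V) := relIndex_sup_of_le_normalizer (inf_le_right.trans hVK)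
      _ = (K ⊓ A).relIndex (K ⊓ V) := by
        rw [← inf_relIndex_right (A ⊓ V), ← inf_relIndex_right (K ⊓ A)]
        congr 1
        ext
        simp only [mem_inf]
        tauto
      _ ∣ (K ⊓ A).relIndex K := by
        rw [hinf]
        exact relIndex_dvd_of_le_right_of_normal inf_le_left
      _ = A.index := by
        rw [inf_relIndex_left, ← relIndex_sup_of_le_normalizer le_normalizer_of_normal, sup_comm,
          hsup, relIndex_top_right]
  have hcommV : ⁅V, V⁆ ≤ A ⊓ V ⊔ K ⊓ V :=
    (le_inf ((commutator_mono le_top le_top).trans hcomm) V.commutator_le_self).trans le_sup_right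
  exact (KPtStep.reflTransGen_of_relIndex_dvd hA hcond le_sup_left hidx).tail
    ⟨hXV, Or.inl (normal_subgroupOf_of_commutator_le hXV hcommV)⟩

theorem KPtStep.reflTransGen_inf {A C : Subgroup G} (h : KPtStep t A C) (U : Subgroup G) :
    ReflTransGen (KPtStep t) (A ⊓ U) (C ⊓ U) := by
  obtain ⟨hAC, hstep⟩ := h
  suffices hC : ReflTransGen (KPtStep t) (A.subgroupOf C ⊓ U.subgroupOf C) (U.subgroupOf C) by
    have hmap := hC.lift (·.map C.subtype) fun _ _ => KPtStep.map_subtype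
    have hinf : A.subgroupOf C ⊓ U.subgroupOf C = (A ⊓ U).subgroupOf C := (comap_inf _ _ _).symm
    rwa [Function.onFun, hinf, subgroupOf_map_subtype, subgroupOf_map_subtype,
      inf_right_comm, inf_of_le_left hAC, inf_comm U] at hmap
  rcases hstep with hnormal | ⟨p, hp, hidx, hcond⟩
  · exact .single ⟨inf_le_right, Or.inl (by rw [inf_subgroupOf_right]; infer_instance)⟩
  · have hidx' : (A.subgroupOf C).index = p := hidx
    exact reflTransGen_kPtStep_inf_of_index_prime (hidx' ▸ hp) (hidx' ▸ hcond) _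

end Solvable

theorem reflTransGen_kPtStep_subgroupOf {G : Type*} [Group G] {t : ℕ} {K U : Subgroup G}
    (h : ReflTransGen (KPtStep t) K U) :
    ReflTransGen (KPtStep t) (K.subgroupOf U) (⊤ : Subgroup U) := by
  induction h using ReflTransGen.head_induction_on with
  | refl => rw [subgroupOf_self]
  | head hstep hchain ih => exact .head (hstep.subgroupOf (KPtStep.le_of_reflTransGen hchain)) ih

theorem stmt_7_general {G : Type*} [Group G] [Finite G] [Group.IsSolvable G] (t : ℕ)
    (H U : Subgroup G) (hH : KPtSubnormal t H) :
    KPtSubnormal t ((H ⊓ U).subgroupOf U) := by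
  have hchain := hH.lift' (· ⊓ U) fun _ _ h => h.reflTransGen_inf U
  rw [Function.onFun, top_inf_eq] at hchain
  exact reflTransGen_kPtStep_subgroupOf hchain

theorem stmt_7 {G : Type*} [Group G] [Finite G] [Group.IsSolvable G] (t : ℕ) (ht : 1 ≤ t)
    (H U : Subgroup G) (hH : KPtSubnormal t H) :
    KPtSubnormal t ((H ⊓ U).subgroupOf U) :=
  stmt_7_general t H U hH
end

section
/- Let t = 3 and let G be the semidirect product of a cyclic group A of order 17 by its full automorphism group B ≅ Z_16. The subgroup H of order 2 contained in B is K-P-subnormal in G (via the chain H ⊴ B < G with |G : B| = 17) but H is not K-P_3-subnormal in G. -/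
/-- One step of a `K`-`ℙ`-subnormal chain: normal or of prime index. -/
def KPStep {G : Type*} [Group G] (A B : Subgroup G) : Prop :=
  A ≤ B ∧ ((A.subgroupOf B).Normal ∨ ∃ p : ℕ, p.Prime ∧ A.relIndex B = p)

/-- `H` is `K`-`ℙ`-subnormal in `G`. -/
def KPSubnormal {G : Type*} [Group G] (H : Subgroup G) : Prop :=
  Relation.ReflTransGen KPStep H ⊤

/-- The holomorph of `Z₁₇`: the semidirect product of a cyclic group of order 17
by its full automorphism group (which is cyclic of order 16). -/
abbrev G17 : Type :=
  SemidirectProduct (Multiplicative (ZMod 17)) (MulAut (Multiplicative (ZMod 17)))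
    (MonoidHom.id (MulAut (Multiplicative (ZMod 17))))

/-!
`H` is normal in the abelian group `B ≅ Aut(ℤ/17)`, and `|G : B| = 17`, which gives the
`K`-`ℙ`-subnormal chain `H ⊴ B < G`.

Let `A ≅ ℤ/17` be the normal subgroup of order 17; it is its own centralizer. Along any
`K`-`ℙ₃` chain starting at `H` every member `K` stays nontrivial and meets `A` trivially, so
the chain never reaches `G`. If a step `K ≤ L` had `A ≤ L`, then either `K ⊴ L`, whence
`[A, K] ≤ A ∩ K = 1` and `K ≤ C(A) = A`, i.e. `K = 1`; or `|L : K| = p` is prime, and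
`|A| = |K ⊔ A : K|` divides `p`, so `p = 17`, which `ℙ₃` excludes because `2⁴ ∣ 16`.
-/

instance IsCyclic.isMulCommutative_mulAut {G : Type*} [Group G] [IsCyclic G] :
    IsMulCommutative (MulAut G) :=
  ⟨⟨fun f g => (IsCyclic.mulAutMulEquiv G).injective (by simp only [map_mul, mul_comm])⟩⟩

namespace Subgroup

variable {G : Type*} [Group G]

theorem disjoint_or_le_of_prime_card {A L : Subgroup G} (hA : (Nat.card A).Prime) :
    Disjoint A L ∨ A ≤ L := by
  have : Fact (Nat.card A).Prime := ⟨hA⟩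
  rw [disjoint_comm, ← subgroupOf_eq_bot, ← subgroupOf_eq_top]
  exact eq_bot_or_eq_top_of_prime_card (L.subgroupOf A)

theorem eq_bot_of_normal_subgroupOf_of_disjoint {A K L : Subgroup G} [A.Normal]
    (hcent : centralizer A ≤ A) (hKL : K ≤ L) (hAL : A ≤ L) [(K.subgroupOf L).Normal]
    (hdisj : Disjoint A K) : K = ⊥ := by
  have hcomm : ⁅A, K⁆ = ⊥ := le_bot_iff.mp <| (le_inf (commutator_le_left A K)
    (le_normalizer_iff_commutator_le_right.mp
      (hAL.trans (le_normalizer_of_normal_subgroupOf hKL)))).trans (disjoint_iff.mp hdisj).le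
  have hKA : K ≤ A :=
    (le_centralizer_iff.mp (commutator_eq_bot_iff_le_centralizer.mp hcomm)).trans hcent
  exact disjoint_self.mp (hdisj.mono_left hKA)

theorem relIndex_sup_eq_card_of_disjoint {A K : Subgroup G} [A.Normal] [Finite K]
    (hdisj : Disjoint A K) : K.relIndex (K ⊔ A) = Nat.card A := by
  have hK : Nat.card K ≠ 0 := Nat.card_pos.ne'
  refine Nat.eq_of_mul_eq_mul_left (Nat.pos_of_ne_zero hK) ?_
  calc Nat.card K * K.relIndex (K ⊔ A)
      = (⊥ : Subgroup G).relIndex (K ⊔ A) := by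
        rw [← relIndex_mul_relIndex ⊥ K (K ⊔ A) bot_le le_sup_left, relIndex_bot_left]
    _ = Nat.card A * A.relIndex K := by
        rw [← relIndex_mul_relIndex ⊥ A (K ⊔ A) bot_le le_sup_right, relIndex_bot_left,
          sup_comm, relIndex_sup_left]
    _ = Nat.card K * Nat.card A := by
        rw [← inf_relIndex_right, disjoint_iff.mp hdisj, relIndex_bot_left, mul_comm]

theorem card_dvd_relIndex_of_disjoint {A K L : Subgroup G} [A.Normal] [Finite K] (hKL : K ≤ L)
    (hAL : A ≤ L) (hdisj : Disjoint A K) : Nat.card A ∣ K.relIndex L := by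
  rw [← relIndex_mul_relIndex K (K ⊔ A) L le_sup_left (sup_le hKL hAL),
    relIndex_sup_eq_card_of_disjoint hdisj]
  exact dvd_mul_right _ _

theorem disjoint_of_kPtStep [Finite G] {A : Subgroup G} [A.Normal] (hA : (Nat.card A).Prime)
    (hcent : centralizer A ≤ A) {t r : ℕ} (hr : r.Prime) (hrA : r ^ (t + 1) ∣ Nat.card A - 1)
    {K L : Subgroup G} (hK : K ≠ ⊥) (hdisj : Disjoint A K) (hstep : KPtStep t K L) :
    Disjoint A L := by
  refine (disjoint_or_le_of_prime_card hA).resolve_right fun hAL => ?_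
  obtain ⟨hKL, hnormal | ⟨p, hp, hindex, hp_sub⟩⟩ := hstep
  · exact hK (eq_bot_of_normal_subgroupOf_of_disjoint hcent hKL hAL hdisj)
  · have hAp : Nat.card A = p :=
      (Nat.prime_dvd_prime_iff_eq hA hp).mp (hindex ▸ card_dvd_relIndex_of_disjoint hKL hAL hdisj)
    exact hp_sub r hr (hAp ▸ hrA)

theorem not_kPtSubnormal_of_disjoint [Finite G] {A : Subgroup G} [A.Normal]
    (hA : (Nat.card A).Prime) (hcent : centralizer A ≤ A) {t r : ℕ} (hr : r.Prime)
    (hrA : r ^ (t + 1) ∣ Nat.card A - 1) {H : Subgroup G} (hH : H ≠ ⊥) (hdisj : Disjoint A H) :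
    ¬ KPtSubnormal t H := by
  intro hsub
  have hchain : ∀ L, Relation.ReflTransGen (KPtStep t) H L → H ≤ L ∧ Disjoint A L := by
    intro L hL
    induction hL with
    | refl => exact ⟨le_rfl, hdisj⟩
    | tail _ hstep ih =>
      exact ⟨ih.1.trans hstep.1,
        disjoint_of_kPtStep hA hcent hr hrA (ne_bot_of_le_ne_bot hH ih.1) ih.2 hstep⟩
  have hA_bot : A = ⊥ := disjoint_top.mp (hchain ⊤ hsub).2
  exact Nat.not_prime_one (by simpa [hA_bot] using hA)

end Subgroup

namespace SemidirectProduct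

variable {N G : Type*} [Group G]

instance [Group N] [Finite N] [Finite G] {φ : G →* MulAut N} : Finite (N ⋊[φ] G) :=
  Finite.of_equiv _ equivProd.symm

instance [Group N] {φ : G →* MulAut N} : (inl : N →* N ⋊[φ] G).range.Normal :=
  range_inl_eq_ker_rightHom (φ := φ) ▸ inferInstance

theorem centralizer_range_inl_le [CommGroup N] {φ : G →* MulAut N} (hφ : Function.Injective φ) :
    Subgroup.centralizer ((inl : N →* N ⋊[φ] G).range : Set (N ⋊[φ] G)) ≤ inl.range := by
  intro k hk
  rw [Subgroup.mem_centralizer_iff] at hk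
  rw [range_inl_eq_ker_rightHom, MonoidHom.mem_ker, rightHom_eq_right]
  refine hφ (MulEquiv.ext fun n => ?_)
  have h := congrArg left (hk (inl n) ⟨n, rfl⟩)
  simp only [mul_left, left_inl, right_inl, map_one, MulAut.one_apply] at h
  rw [map_one, MulAut.one_apply]
  exact mul_left_cancel (h.symm.trans (mul_comm n k.left))

theorem index_range_inr [Group N] [Finite G] (φ : G →* MulAut N) :
    (inr : G →* N ⋊[φ] G).range.index = Nat.card N := by
  have hG : 0 < Nat.card G := Nat.card_pos
  have h := (inr : G →* N ⋊[φ] G).range.card_mul_index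
  rw [card, Nat.card_congr (MonoidHom.ofInjective inr_injective).toEquiv.symm] at h
  exact Nat.eq_of_mul_eq_mul_left hG (h.trans (mul_comm _ _))

end SemidirectProduct

open SemidirectProduct Subgroup

theorem stmt_10 (H : Subgroup G17)
    (hle : H ≤ SemidirectProduct.inr.range) (hcard : Nat.card H = 2) :
    KPSubnormal H ∧ ¬ KPtSubnormal 3 H := by
  have hA : Nat.card (inl : Multiplicative (ZMod 17) →* G17).range = 17 :=
    (Nat.card_congr (MonoidHom.ofInjective inl_injective).toEquiv).symm.trans (Nat.card_zmod 17)
  have hA_prime : (Nat.card (inl : Multiplicative (ZMod 17) →* G17).range).Prime := by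
    rw [hA]; norm_num
  -- `inr.range` is abelian, being the image of the abelian group `Aut(ℤ/17)`.
  refine ⟨.head ⟨hle, .inl inferInstance⟩ (.single ⟨le_top, .inr ⟨17, by norm_num, ?_⟩⟩), ?_⟩
  · rw [relIndex_top_right, index_range_inr]
    exact Nat.card_zmod 17
  have hH : H ≠ ⊥ := by
    rintro rfl
    simp at hcard
  have hdisj : Disjoint (inl : Multiplicative (ZMod 17) →* G17).range H :=
    (disjoint_or_le_of_prime_card hA_prime).resolve_right fun hAH => by
      have := card_dvd_of_le hAH
      rw [hA, hcard] at this
      norm_num at this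
  exact not_kPtSubnormal_of_disjoint (r := 2) hA_prime
    (centralizer_range_inl_le Function.injective_id) Nat.prime_two (by rw [hA]; norm_num) hH hdisj
end

section
/- Let t = 1 and let G be the nonabelian group of order 39. The Sylow 3-subgroup H of G is U_1-subnormal in G (since G ∈ U_1, the U_1-residual of G is trivial), but H is not K-P_1-subnormal in G. -/
/-- A group is supersoluble if it has a chain of normal subgroups from `⊥` to `⊤`
whose successive factors are cyclic (each term is generated by its predecessor
together with one extra element). -/
def IsSupersoluble (G : Type*) [Group G] : Prop :=
  ∃ (n : ℕ) (s : Fin (n + 1) → Subgroup G),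
    Monotone s ∧ s 0 = ⊥ ∧ s (Fin.last n) = ⊤ ∧
    (∀ i, (s i).Normal) ∧
    ∀ i : Fin n, ∃ x : G, s i.succ = s i.castSucc ⊔ Subgroup.zpowers x

/-- Membership in the class `𝔘_t`: supersoluble with exponent not divisible by
the `(t+1)`-th power of any prime. -/
def MemUt (t : ℕ) (G : Type*) [Group G] : Prop :=
  IsSupersoluble G ∧ ∀ p : ℕ, p.Prime → ¬ p ^ (t + 1) ∣ Monoid.exponent G

/-- Auxiliary: the quotient `G ⧸ N` lies in `𝔘_t`. -/
def QuotMemUt (t : ℕ) {G : Type*} [Group G] (N : Subgroup G) [N.Normal] : Prop :=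
  MemUt t (G ⧸ N)

/-- The `𝔘_t`-residual of `G`: the smallest normal subgroup with quotient in `𝔘_t`. -/
noncomputable def UtResidual (t : ℕ) (G : Type*) [Group G] : Subgroup G :=
  sInf {N : Subgroup G | ∃ h : N.Normal, @QuotMemUt t G _ N h}

/-- One step of a `𝔘_t`-subnormal chain: `A ≤ B` and the `𝔘_t`-residual of `B`
is contained in `A`. -/
def UtStep (t : ℕ) {G : Type*} [Group G] (A B : Subgroup G) : Prop :=
  A ≤ B ∧ (UtResidual t B).map B.subtype ≤ A

/-- `H` is `𝔘_t`-subnormal in `G` if there is a chain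
`H = H₀ ≤ H₁ ≤ ⋯ ≤ Hₙ = G` with `Hᵢ^{𝔘_t} ≤ H_{i-1}` for each `i`. -/
def UtSubnormal (t : ℕ) {G : Type*} [Group G] (H : Subgroup G) : Prop :=
  Relation.ReflTransGen (UtStep t) H ⊤

/-!
The Sylow 13-subgroup `Q = ⟨g⟩` of a group of order `39` is normal, and `G = Q ⟨x⟩` for a
generator `x` of `H`, so `G` is supersoluble; since `39` is squarefree, `G ∈ 𝔘₁`, its
`𝔘₁`-residual is trivial, and every subgroup is `𝔘₁`-subnormal in a single step.
On the other hand `H` has prime index `13`, hence is maximal, so a `K`-`ℙ₁`-subnormal chain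
must contain the step `H ≤ G`. That step is not normal (a normal `H` would make `G` cyclic,
hence abelian) and its index is not admissible, because `2 ^ 2 ∣ 13 - 1`.
-/

theorem Relation.ReflTransGen.rel_top_of_isCoatom {α : Type*} [PartialOrder α] [OrderTop α]
    {r : α → α → Prop} (hr : ∀ a b, r a b → a ≤ b) {a : α} (ha : IsCoatom a)
    (h : Relation.ReflTransGen r a ⊤) : r a ⊤ := by
  induction h using Relation.ReflTransGen.head_induction_on with
  | refl => exact absurd rfl ha.1
  | @head b c hbc _ ih =>
    rcases ha.le_iff.mp (hr b c hbc) with rfl | rfl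
    · exact hbc
    · exact ih ha

namespace Subgroup

variable {G : Type*} [Group G]

theorem isCoatom_of_index_prime {H : Subgroup G} (hH : H.index.Prime) : IsCoatom H := by
  refine ⟨fun h => Nat.not_prime_one (by rwa [h, index_top] at hH), fun K hHK => ?_⟩
  rcases hH.eq_one_or_self_of_dvd _ (index_dvd_of_le hHK.le) with hK | hK
  · exact index_eq_one.mp hK
  · have : H.relIndex K = 1 := by
      have := relIndex_mul_index hHK.le
      rw [hK] at this
      exact (Nat.mul_eq_right hH.ne_zero).mp this
    exact absurd (relIndex_eq_one.mp this) hHK.not_ge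

theorem exists_zpowers_eq_of_card_prime {H : Subgroup G} {p : ℕ} [Fact p.Prime]
    (hH : Nat.card H = p) : ∃ g : G, zpowers g = H ∧ orderOf g = p := by
  have := isCyclic_of_prime_card hH
  obtain ⟨g, hg⟩ := H.isCyclic_iff_exists_zpowers_eq_top.mp this
  exact ⟨g, hg, by rw [← Nat.card_zpowers, hg, hH]⟩

end Subgroup

section

variable {G : Type*} [Group G]

open Subgroup

theorem isCyclic_of_zpowers_normal [Finite G] {x y : G}
    [(zpowers x).Normal] [(zpowers y).Normal]
    (hxy : (orderOf x).Coprime (orderOf y)) (hG : Nat.card G = orderOf x * orderOf y) :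
    IsCyclic G := by
  have hdisj : Disjoint (zpowers x) (zpowers y) :=
    disjoint_of_coprime_natCard (by rwa [Nat.card_zpowers, Nat.card_zpowers])
  have hcomm : Commute x y :=
    commute_of_normal_of_disjoint _ _ inferInstance inferInstance hdisj x y
      (mem_zpowers x) (mem_zpowers y)
  exact isCyclic_of_orderOf_eq_card (x * y)
    (by rw [hcomm.orderOf_mul_eq_mul_orderOf_of_coprime hxy, hG])

theorem isSupersoluble_of_zpowers_sup_zpowers {g x : G} [(zpowers g).Normal]
    (h : zpowers g ⊔ zpowers x = ⊤) : IsSupersoluble G := by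
  refine ⟨2, ![⊥, zpowers g, ⊤], ?_, rfl, rfl, ?_, ?_⟩
  · intro i j hij
    fin_cases i <;> fin_cases j <;> first
      | exact le_rfl | exact bot_le | exact le_top | exact absurd hij (by decide)
  · intro i
    fin_cases i
    exacts [normal_bot, ‹(zpowers g).Normal›, normal_top]
  · intro i
    fin_cases i
    · exact ⟨g, (bot_sup_eq _).symm⟩
    · exact ⟨x, h.symm⟩

theorem IsSupersoluble.of_mulEquiv {G' : Type*} [Group G'] (e : G ≃* G')
    (h : IsSupersoluble G) : IsSupersoluble G' := by
  obtain ⟨n, s, hmono, h0, hlast, hnorm, hstep⟩ := h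
  refine ⟨n, fun i => (s i).map e.toMonoidHom, fun i j hij => map_mono (hmono hij),
    ?_, ?_, fun i => (hnorm i).map _ e.surjective, fun i => ?_⟩
  · simp only [h0, Subgroup.map_bot]
  · simp only [hlast]
    exact map_top_of_surjective e.toMonoidHom e.surjective
  · obtain ⟨x, hx⟩ := hstep i
    exact ⟨e x, by simp only [hx, Subgroup.map_sup, MonoidHom.map_zpowers]; rfl⟩

theorem MemUt.of_mulEquiv {t : ℕ} {G' : Type*} [Group G'] (e : G ≃* G') (h : MemUt t G) :
    MemUt t G' :=
  ⟨h.1.of_mulEquiv e, by rw [← Monoid.exponent_eq_of_mulEquiv e]; exact h.2⟩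

theorem memUt_one_of_squarefree_card [Finite G] (hs : IsSupersoluble G)
    (hG : Squarefree (Nat.card G)) : MemUt 1 G := by
  refine ⟨hs, fun p hp hdvd => ?_⟩
  have := hG.squarefree_of_dvd Group.exponent_dvd_nat_card
  exact hp.one_lt.ne' (Nat.isUnit_iff.mp (this p (by rwa [← pow_two])))

theorem utResidual_eq_bot {t : ℕ} (h : MemUt t G) : UtResidual t G = ⊥ :=
  le_bot_iff.mp <| sInf_le ⟨normal_bot, h.of_mulEquiv (QuotientGroup.quotientBot).symm⟩

theorem utSubnormal_of_memUt {t : ℕ} (h : MemUt t G) (H : Subgroup G) : UtSubnormal t H := by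
  refine Relation.ReflTransGen.single ⟨le_top, ?_⟩
  rw [utResidual_eq_bot (h.of_mulEquiv topEquiv.symm), Subgroup.map_bot]
  exact bot_le

theorem not_kPtStep_top_of_not_normal {t : ℕ} {H : Subgroup G} (hH : ¬ H.Normal) {q : ℕ}
    (hq : q.Prime) (hqH : q ^ (t + 1) ∣ H.index - 1) : ¬ KPtStep t H ⊤ := by
  rintro ⟨-, hN | ⟨p, -, hp, hpq⟩⟩
  · rw [normal_subgroupOf_iff_le_normalizer le_top, top_le_iff, normalizer_eq_top_iff] at hN
    exact hH hN
  · rw [relIndex_top_right] at hp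
    exact hpq q hq (hp ▸ hqH)

end

namespace Sylow

variable {G : Type*} [Group G] [Finite G] {p : ℕ} [Fact p.Prime]

theorem card_eq_of_card_eq_mul {m : ℕ} (hm : ¬ p ∣ m) (hG : Nat.card G = p * m)
    (P : Sylow p G) : Nat.card P = p := by
  have hm0 : m ≠ 0 := by rintro rfl; simp at hm
  rw [P.card_eq_multiplicity, hG, Nat.factorization_mul (Fact.out : p.Prime).ne_zero hm0,
    Finsupp.add_apply, Nat.Prime.factorization_self Fact.out,
    Nat.factorization_eq_zero_of_not_dvd hm, pow_one]

theorem normal_of_card_eq_mul_of_lt {q : ℕ} [Fact q.Prime] (hpq : p < q)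
    (hG : Nat.card G = p * q) (Q : Sylow q G) : (Q : Subgroup G).Normal := by
  have hQ : Nat.card Q = q :=
    Q.card_eq_of_card_eq_mul (fun h => hpq.not_ge (Nat.le_of_dvd (Fact.out : p.Prime).pos h))
      (hG.trans (mul_comm p q))
  have hindex : (Q : Subgroup G).index = p := by
    have := Q.card_mul_index
    rw [hQ, hG, mul_comm] at this
    exact Nat.eq_of_mul_eq_mul_right (Fact.out : q.Prime).pos this
  have hdvd : Nat.card (Sylow q G) ∣ p := hindex ▸ Q.card_dvd_index
  have hmod : Nat.card (Sylow q G) ≡ 1 [MOD q] := card_sylow_modEq_one q G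
  have : Subsingleton (Sylow q G) := by
    rw [← Finite.card_le_one_iff_subsingleton]
    rcases (Fact.out : p.Prime).eq_one_or_self_of_dvd _ hdvd with h | h
    · exact h.le
    · rw [h, Nat.ModEq, Nat.mod_eq_of_lt hpq, Nat.mod_eq_of_lt (Fact.out : q.Prime).one_lt] at hmod
      exact absurd hmod (Fact.out : p.Prime).ne_one
  exact Q.normal_of_subsingleton

end Sylow

theorem stmt_19 {G : Type*} [Group G] [Finite G]
    (hcard : Nat.card G = 39) (hnab : ¬ ∀ a b : G, a * b = b * a)
    (H : Sylow 3 G) :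
    UtSubnormal 1 (H : Subgroup G) ∧ ¬ KPtSubnormal 1 (H : Subgroup G) := by
  have : Fact (Nat.Prime 3) := ⟨by norm_num⟩
  have : Fact (Nat.Prime 13) := ⟨by norm_num⟩
  have hG : Nat.card G = 3 * 13 := hcard
  obtain ⟨Q⟩ : Nonempty (Sylow 13 G) := inferInstance
  have hH3 : Nat.card H = 3 := H.card_eq_of_card_eq_mul (by norm_num) hG
  obtain ⟨x, hxH, hx⟩ := Subgroup.exists_zpowers_eq_of_card_prime hH3
  obtain ⟨g, hgQ, hg⟩ := Subgroup.exists_zpowers_eq_of_card_prime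
    (Q.card_eq_of_card_eq_mul (by norm_num) (hG.trans (mul_comm 3 13)))
  have hQ : (Subgroup.zpowers g).Normal := hgQ ▸ Q.normal_of_card_eq_mul_of_lt (by norm_num) hG
  have hHindex : (H : Subgroup G).index = 13 := by
    have := (H : Subgroup G).card_mul_index
    rw [hH3, hcard] at this
    omega
  have hHmax : IsCoatom (H : Subgroup G) := Subgroup.isCoatom_of_index_prime (hHindex ▸ Fact.out)
  have hHnormal : ¬ (H : Subgroup G).Normal := fun hN => by
    rw [← hxH] at hN
    exact hnab (isCyclic_of_zpowers_normal (x := x) (y := g) (by rw [hx, hg]; norm_num)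
      (by rw [hx, hg, hcard])).commGroup.mul_comm
  have hgH : ¬ Subgroup.zpowers g ≤ H := fun h => by
    have := Subgroup.card_dvd_of_le h
    rw [Nat.card_zpowers, hg, hH3] at this
    norm_num at this
  have hsup : Subgroup.zpowers g ⊔ Subgroup.zpowers x = ⊤ := by
    rw [sup_comm, hxH]
    exact hHmax.lt_iff.mp (left_lt_sup.mpr hgH)
  have hsquarefree : Squarefree (Nat.card G) := hG ▸ Nat.squarefree_mul_iff.mpr
    ⟨by norm_num, (Fact.out : Nat.Prime 3).squarefree, (Fact.out : Nat.Prime 13).squarefree⟩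
  refine ⟨utSubnormal_of_memUt (memUt_one_of_squarefree_card
    (isSupersoluble_of_zpowers_sup_zpowers hsup) hsquarefree) _, fun h => ?_⟩
  exact not_kPtStep_top_of_not_normal hHnormal Nat.prime_two (by rw [hHindex]; norm_num)
    (h.rel_top_of_isCoatom (r := KPtStep 1) (fun _ _ => And.left) hHmax)
end
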